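/- (Proposition 3.1, estimate (3.12b), zero mean momentum.) For all real α, β ≥ 0 there exist constants C > 0 and σ₀ ∈ (0,1) such that for all σ ∈ (0,σ₀): ( ∫_{ℝ²}∫_{ℝ²} [ (ln(2+|p|))^α / (1+|ln|p||)^β ]² · |φ_in(p₁,p₂)|² dp₁ dp₂ )^{1/2} ≤ C·(ln(1/σ))^{−β}. -/

import Mathlib

open MeasureTheory

noncomputable abbrev R2 : Type := EuclideanSpace ℝ (Fin 2)

/-!
Split the momentum space according to whether `|p| ≤ √σ`. If so, `|ln |p|| ≥ ln (1/σ) / 2`, so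
the weight is `O(ln (1/σ) ^ (-β))`. If not, `|p₁|² + |p₂|² ≥ |p|² / 2 > σ / 2`, and one factor
`exp (-(|p₁|² + |p₂|²) / (2σ²))` of `|φ_in|²` both absorbs the growth `exp (α |p|)` of the weight
and leaves `exp (-1/(8σ))`, which is `o(ln (1/σ) ^ (-2β))`. Either way the squared weight times that
factor is `O(ln (1/σ) ^ (-2β))`, and what remains of `|φ_in|²` is `(σ²π)⁻¹ φ_in`, of integral `4`.
-/

open Filter Topology Real

noncomputable section

def logWeight (α β t : ℝ) : ℝ := log (2 + t) ^ α / (1 + |log t|) ^ β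

/-- `φ_in(p₁, p₂) = φ^σ(p₁) φ^σ(p₂)`. -/
def gaussianIn (σ : ℝ) (x : R2 × R2) : ℝ :=
  (σ ^ 2 * π)⁻¹ * exp (-‖x.1‖ ^ 2 / (2 * σ ^ 2)) * exp (-‖x.2‖ ^ 2 / (2 * σ ^ 2))

end

theorem norm_one_sub_smul_sub_smul_le {E : Type*} [SeminormedAddCommGroup E] [NormedSpace ℝ E]
    {μ : ℝ} (hμ : μ ∈ Set.Icc 0 1) (a b : E) : ‖(1 - μ) • a - μ • b‖ ≤ ‖a‖ + ‖b‖ := by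
  obtain ⟨hμ0, hμ1⟩ := hμ
  calc ‖(1 - μ) • a - μ • b‖ ≤ (1 - μ) * ‖a‖ + μ * ‖b‖ := by
        refine (norm_sub_le _ _).trans_eq ?_
        rw [norm_smul, norm_smul, Real.norm_of_nonneg (by linarith), Real.norm_of_nonneg hμ0]
    _ ≤ ‖a‖ + ‖b‖ := by nlinarith [norm_nonneg a, norm_nonneg b]

theorem ae_smul_fst_sub_smul_snd_ne_zero {E : Type*} [NormedAddCommGroup E] [NormedSpace ℝ E]
    [FiniteDimensional ℝ E] [MeasurableSpace E] [BorelSpace E] [Nontrivial E]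
    (μ ν : Measure E) [μ.IsAddHaarMeasure] [ν.IsAddHaarMeasure] {a b : ℝ} (hab : a ≠ 0 ∨ b ≠ 0) :
    ∀ᵐ x ∂μ.prod ν, a • x.1 - b • x.2 ≠ 0 := by
  set L : E × E →ₗ[ℝ] E := a • LinearMap.fst ℝ E E - b • LinearMap.snd ℝ E E
  have hL : LinearMap.ker L ≠ ⊤ := by
    obtain ⟨v, hv⟩ := exists_ne (0 : E)
    rw [Ne, LinearMap.ker_eq_top]
    intro h
    rcases hab with ha | hb
    · have := LinearMap.congr_fun h (v, 0)
      simp [L, ha, hv] at this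
    · have := LinearMap.congr_fun h (0, v)
      simp [L, hb, hv] at this
  rw [ae_iff]
  convert Measure.addHaar_submodule (μ.prod ν) _ hL using 2
  ext x
  simp [L]

theorem integral_exp_neg_sq_norm_div {c : ℝ} (hc : 0 < c) :
    ∫ v : R2, exp (-‖v‖ ^ 2 / c) = π * c := by
  have h := GaussianFourier.integral_rexp_neg_mul_sq_norm (V := R2) (inv_pos.mpr hc)
  rw [finrank_euclideanSpace_fin] at h
  norm_num at h
  simpa only [div_eq_inv_mul, mul_neg] using h

theorem integrable_exp_neg_sq_norm_div {c : ℝ} (hc : 0 < c) :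
    Integrable fun v : R2 => exp (-‖v‖ ^ 2 / c) :=
  Integrable.of_integral_ne_zero (by rw [integral_exp_neg_sq_norm_div hc]; positivity)

theorem eventually_exp_neg_le_log_rpow_neg_sq {β : ℝ} (hβ : 0 ≤ β) :
    ∀ᶠ σ in 𝓝[>] (0:ℝ), exp (-(1 / (8 * σ))) ≤ (log (1 / σ) ^ (-β)) ^ 2 := by
  have hdecay : ∀ᶠ u in atTop, u ^ (2 * β) * exp (-(1 / 8) * u) ≤ 1 :=
    (tendsto_rpow_mul_exp_neg_mul_atTop_nhds_zero _ _ (by norm_num)).eventually_le_const one_pos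
  have hinv : ∀ᶠ u in atTop, exp (-(1 / 8) * u) ≤ (log u ^ (-β)) ^ 2 := by
    filter_upwards [hdecay, eventually_gt_atTop 1] with u hu hu1
    have hlog : 0 < log u := log_pos hu1
    have hpow : log u ^ (2 * β) ≤ u ^ (2 * β) :=
      rpow_le_rpow hlog.le (log_le_self (by linarith)) (by linarith)
    have hsq : (log u ^ (-β)) ^ 2 = (log u ^ (2 * β))⁻¹ := by
      rw [← rpow_natCast, ← rpow_mul hlog.le, ← rpow_neg hlog.le]
      ring_nf
    rw [hsq, ← mul_one (_ ⁻¹), le_inv_mul_iff₀ (rpow_pos_of_pos hlog _)]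
    exact (mul_le_mul_of_nonneg_right hpow (exp_pos _).le).trans hu
  filter_upwards [tendsto_inv_nhdsGT_zero.eventually hinv] with σ hσ
  convert hσ using 3
  · ring
  · rw [one_div]

section logWeight

variable {α β t : ℝ}

theorem logWeight_nonneg (ht : 0 ≤ t) : 0 ≤ logWeight α β t :=
  div_nonneg (rpow_nonneg (log_nonneg (by linarith)) _) (rpow_nonneg (by positivity) _)

theorem logWeight_le_exp (hα : 0 ≤ α) (hβ : 0 ≤ β) (ht : 0 ≤ t) :
    logWeight α β t ≤ exp (α * t) := by
  have hlog : 0 ≤ log (2 + t) := log_nonneg (by linarith)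
  have hden : 1 ≤ (1 + |log t|) ^ β := one_le_rpow (by simp) hβ
  have hexp : log (2 + t) ≤ exp t := by
    linarith [log_le_sub_one_of_pos (show 0 < 2 + t by linarith), add_one_le_exp t]
  calc logWeight α β t ≤ log (2 + t) ^ α := div_le_self (rpow_nonneg hlog _) hden
    _ ≤ exp t ^ α := rpow_le_rpow hlog hexp hα
    _ = exp (α * t) := by rw [← exp_mul, mul_comm]

theorem logWeight_le_of_le_sqrt {σ : ℝ} (hα : 0 ≤ α) (hβ : 0 ≤ β) (hσ : σ ∈ Set.Ioo 0 1)
    (ht : 0 < t) (htσ : t ≤ √σ) :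
    logWeight α β t ≤ 2 ^ (α + β) * log (1 / σ) ^ (-β) := by
  obtain ⟨hσ0, hσ1⟩ := hσ
  have hL : 0 < log (1 / σ) := log_pos (one_lt_one_div hσ0 hσ1)
  have ht1 : t ≤ 1 := htσ.trans (sqrt_le_one.mpr hσ1.le)
  have hnum : log (2 + t) ^ α ≤ 2 ^ α :=
    rpow_le_rpow (log_nonneg (by linarith))
      (by linarith [log_le_sub_one_of_pos (show 0 < 2 + t by linarith)]) hα
  have hlogt : log (1 / σ) / 2 ≤ 1 + |log t| := by
    have : log t ≤ log √σ := log_le_log ht htσ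
    rw [log_sqrt hσ0.le] at this
    rw [one_div, log_inv]
    linarith [neg_le_abs (log t)]
  calc logWeight α β t ≤ 2 ^ α / (log (1 / σ) / 2) ^ β :=
        div_le_div₀ (by positivity) hnum (by positivity) (rpow_le_rpow (by positivity) hlogt hβ)
    _ = 2 ^ (α + β) * log (1 / σ) ^ (-β) := by
        rw [div_rpow hL.le zero_le_two, rpow_add zero_lt_two, rpow_neg hL.le]
        field_simp

theorem logWeight_sq_mul_exp_le_of_sqrt_lt {σ S : ℝ} (hα : 0 ≤ α) (hβ : 0 ≤ β)
    (hσ : σ ∈ Set.Ioo 0 1) (htσ : σ < t ^ 2) (htS : t ^ 2 ≤ 2 * S) (ht : 0 ≤ t) :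
    logWeight α β t ^ 2 * exp (-S / (2 * σ ^ 2)) ≤ exp (8 * α ^ 2) * exp (-(1 / (8 * σ))) := by
  obtain ⟨hσ0, hσ1⟩ := hσ
  have hexponent : 2 * (α * t) + -S / (2 * σ ^ 2) ≤ 8 * α ^ 2 + -(1 / (8 * σ)) := by
    have hamgm : 2 * (α * t) ≤ 8 * α ^ 2 + t ^ 2 / 8 := by nlinarith [sq_nonneg (t - 8 * α)]
    have hgauss : t ^ 2 / 8 + 1 / (8 * σ) ≤ S / (2 * σ ^ 2) := by
      rw [div_add_div _ _ (by norm_num) (by positivity),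
        div_le_div_iff₀ (by positivity) (by positivity)]
      nlinarith [mul_le_mul_of_nonneg_left htS (by positivity : (0:ℝ) ≤ σ),
        mul_nonneg hσ0.le (sq_nonneg t), mul_nonneg (mul_nonneg hσ0.le hσ0.le) (sq_nonneg t)]
    rw [neg_div]
    linarith
  calc logWeight α β t ^ 2 * exp (-S / (2 * σ ^ 2))
      ≤ exp (α * t) ^ 2 * exp (-S / (2 * σ ^ 2)) := by
        gcongr
        · exact logWeight_nonneg ht
        · exact logWeight_le_exp hα hβ ht
    _ = exp (2 * (α * t) + -S / (2 * σ ^ 2)) := by rw [exp_add, ← exp_nat_mul]; norm_num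
    _ ≤ exp (8 * α ^ 2 + -(1 / (8 * σ))) := exp_le_exp.mpr hexponent
    _ = exp (8 * α ^ 2) * exp (-(1 / (8 * σ))) := exp_add _ _

theorem logWeight_sq_mul_exp_le {σ S : ℝ} (hα : 0 ≤ α) (hβ : 0 ≤ β) (hσ : σ ∈ Set.Ioo 0 1)
    (hsmall : exp (-(1 / (8 * σ))) ≤ (log (1 / σ) ^ (-β)) ^ 2) (ht : 0 < t) (htS : t ^ 2 ≤ 2 * S) :
    logWeight α β t ^ 2 * exp (-S / (2 * σ ^ 2)) ≤
      ((2 ^ (α + β)) ^ 2 + exp (8 * α ^ 2)) * (log (1 / σ) ^ (-β)) ^ 2 := by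
  rcases le_or_gt (t ^ 2) σ with hnear | hfar
  · have hexp : exp (-S / (2 * σ ^ 2)) ≤ 1 :=
      exp_le_one_iff.mpr (div_nonpos_of_nonpos_of_nonneg (by nlinarith) (by positivity))
    have hW := logWeight_le_of_le_sqrt hα hβ hσ ht (le_sqrt_of_sq_le hnear)
    calc logWeight α β t ^ 2 * exp (-S / (2 * σ ^ 2)) ≤ logWeight α β t ^ 2 :=
          mul_le_of_le_one_right (sq_nonneg _) hexp
      _ ≤ (2 ^ (α + β) * log (1 / σ) ^ (-β)) ^ 2 := by gcongr; exact logWeight_nonneg ht.le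
      _ ≤ _ := by rw [mul_pow]; gcongr; exact le_add_of_nonneg_right (exp_pos _).le
  · calc logWeight α β t ^ 2 * exp (-S / (2 * σ ^ 2))
        ≤ exp (8 * α ^ 2) * exp (-(1 / (8 * σ))) :=
          logWeight_sq_mul_exp_le_of_sqrt_lt hα hβ hσ hfar htS ht.le
      _ ≤ exp (8 * α ^ 2) * (log (1 / σ) ^ (-β)) ^ 2 := by gcongr
      _ ≤ _ := by gcongr; exact le_add_of_nonneg_left (sq_nonneg _)

end logWeight

section gaussianIn

variable {σ : ℝ}

theorem integrable_gaussianIn (hσ : σ ≠ 0) : Integrable (gaussianIn σ) := by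
  have h := integrable_exp_neg_sq_norm_div (c := 2 * σ ^ 2) (by positivity)
  exact ((h.mul_prod h).const_mul (σ ^ 2 * π)⁻¹).congr
    (.of_forall fun x => by simp only [gaussianIn]; ring)

theorem integral_gaussianIn (hσ : σ ≠ 0) : ∫ x, gaussianIn σ x = 4 * π * σ ^ 2 := by
  have h := integral_prod_mul (μ := (volume : Measure R2)) (ν := (volume : Measure R2))
    (fun v => exp (-‖v‖ ^ 2 / (2 * σ ^ 2))) (fun v => exp (-‖v‖ ^ 2 / (2 * σ ^ 2)))
  simp only [gaussianIn, mul_assoc, integral_const_mul]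
  rw [← Measure.volume_eq_prod] at h
  rw [h, integral_exp_neg_sq_norm_div (by positivity)]
  field_simp
  ring

end gaussianIn

section weightedBound

variable {α β μ₁ σ : ℝ}

theorem logWeight_sq_mul_gaussianIn_sq_le (hα : 0 ≤ α) (hβ : 0 ≤ β) (hμ : μ₁ ∈ Set.Icc 0 1)
    (hσ : σ ∈ Set.Ioo 0 1) (hsmall : exp (-(1 / (8 * σ))) ≤ (log (1 / σ) ^ (-β)) ^ 2)
    {x : R2 × R2} (hx : (1 - μ₁) • x.1 - μ₁ • x.2 ≠ 0) :
    logWeight α β ‖(1 - μ₁) • x.1 - μ₁ • x.2‖ ^ 2 * gaussianIn σ x ^ 2 ≤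
      ((2 ^ (α + β)) ^ 2 + exp (8 * α ^ 2)) * (log (1 / σ) ^ (-β)) ^ 2 * (σ ^ 2 * π)⁻¹ *
        gaussianIn σ x := by
  set S := ‖x.1‖ ^ 2 + ‖x.2‖ ^ 2 with hSdef
  have hS : ‖(1 - μ₁) • x.1 - μ₁ • x.2‖ ^ 2 ≤ 2 * S := by
    nlinarith [norm_one_sub_smul_sub_smul_le hμ x.1 x.2, norm_nonneg ((1 - μ₁) • x.1 - μ₁ • x.2),
      sq_nonneg (‖x.1‖ - ‖x.2‖)]
  have hg : gaussianIn σ x = (σ ^ 2 * π)⁻¹ * exp (-S / (2 * σ ^ 2)) := by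
    rw [gaussianIn, mul_assoc, ← exp_add, hSdef]
    ring_nf
  have hg0 : 0 ≤ (σ ^ 2 * π)⁻¹ * gaussianIn σ x := by rw [hg]; positivity
  calc logWeight α β ‖(1 - μ₁) • x.1 - μ₁ • x.2‖ ^ 2 * gaussianIn σ x ^ 2
      = (logWeight α β ‖(1 - μ₁) • x.1 - μ₁ • x.2‖ ^ 2 * exp (-S / (2 * σ ^ 2))) *
          ((σ ^ 2 * π)⁻¹ * gaussianIn σ x) := by
        nth_rw 1 [sq (gaussianIn σ x), hg]
        ring
    _ ≤ ((2 ^ (α + β)) ^ 2 + exp (8 * α ^ 2)) * (log (1 / σ) ^ (-β)) ^ 2 *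
          ((σ ^ 2 * π)⁻¹ * gaussianIn σ x) :=
        mul_le_mul_of_nonneg_right
          (logWeight_sq_mul_exp_le hα hβ hσ hsmall (norm_pos_iff.mpr hx) hS) hg0
    _ = _ := by ring

theorem integral_logWeight_sq_mul_gaussianIn_sq_le (hα : 0 ≤ α) (hβ : 0 ≤ β)
    (hμ : μ₁ ∈ Set.Icc 0 1) (hσ : σ ∈ Set.Ioo 0 1)
    (hsmall : exp (-(1 / (8 * σ))) ≤ (log (1 / σ) ^ (-β)) ^ 2) :
    ∫ x : R2 × R2, logWeight α β ‖(1 - μ₁) • x.1 - μ₁ • x.2‖ ^ 2 * gaussianIn σ x ^ 2 ≤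
      4 * ((2 ^ (α + β)) ^ 2 + exp (8 * α ^ 2)) * (log (1 / σ) ^ (-β)) ^ 2 := by
  have hσ0 : σ ≠ 0 := hσ.1.ne'
  have hμ' : 1 - μ₁ ≠ 0 ∨ μ₁ ≠ 0 := by
    rcases eq_or_ne μ₁ 0 with h | h <;> simp [h]
  -- At `p = 0` the junk value `log 0 = 0` makes the weight `log 2 ^ α`, which is not small.
  have hae : ∀ᵐ x : R2 × R2, (1 - μ₁) • x.1 - μ₁ • x.2 ≠ 0 :=
    ae_smul_fst_sub_smul_snd_ne_zero volume volume hμ'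
  calc ∫ x : R2 × R2, logWeight α β ‖(1 - μ₁) • x.1 - μ₁ • x.2‖ ^ 2 * gaussianIn σ x ^ 2
      ≤ ∫ x, ((2 ^ (α + β)) ^ 2 + exp (8 * α ^ 2)) * (log (1 / σ) ^ (-β)) ^ 2 *
          (σ ^ 2 * π)⁻¹ * gaussianIn σ x :=
        integral_mono_of_nonneg (.of_forall fun _ => mul_nonneg (sq_nonneg _) (sq_nonneg _))
          ((integrable_gaussianIn hσ0).const_mul _)
          (hae.mono fun _ hx => logWeight_sq_mul_gaussianIn_sq_le hα hβ hμ hσ hsmall hx)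
    _ = _ := by
        rw [integral_const_mul, integral_gaussianIn hσ0]
        field_simp

end weightedBound

theorem weighted_bound_zero_momentum (μ₁ : ℝ) (hμ : μ₁ ∈ Set.Icc (0:ℝ) 1)
    (α β : ℝ) (hα : 0 ≤ α) (hβ : 0 ≤ β) :
    ∃ C > (0:ℝ), ∃ σ₀ ∈ Set.Ioo (0:ℝ) 1, ∀ σ ∈ Set.Ioo (0:ℝ) σ₀,
      Real.sqrt (∫ x : R2 × R2,
          (Real.log (2 + ‖(1 - μ₁) • x.1 - μ₁ • x.2‖) ^ α /
              (1 + |Real.log ‖(1 - μ₁) • x.1 - μ₁ • x.2‖|) ^ β) ^ 2 *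
            ((σ ^ 2 * Real.pi)⁻¹ *
              Real.exp (-‖x.1‖ ^ 2 / (2 * σ ^ 2)) * Real.exp (-‖x.2‖ ^ 2 / (2 * σ ^ 2))) ^ 2)
        ≤ C * Real.log (1 / σ) ^ (-β) := by
  obtain ⟨u, hu, hsub⟩ :=
    mem_nhdsGT_iff_exists_Ioo_subset.mp (eventually_exp_neg_le_log_rpow_neg_sq hβ)
  set K := (2 ^ (α + β)) ^ 2 + exp (8 * α ^ 2)
  refine ⟨2 * √K, by positivity, min u (1 / 2), ⟨lt_min hu (by norm_num), by
    linarith [min_le_right u (1 / 2)]⟩, fun σ hσ => ?_⟩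
  have hσ1 : σ ∈ Set.Ioo 0 1 := ⟨hσ.1, by linarith [hσ.2, min_le_right u (1 / 2)]⟩
  have hsmall := hsub ⟨hσ.1, hσ.2.trans_le (min_le_left _ _)⟩
  calc √(∫ x : R2 × R2, logWeight α β ‖(1 - μ₁) • x.1 - μ₁ • x.2‖ ^ 2 * gaussianIn σ x ^ 2)
      ≤ √((2 * √K * log (1 / σ) ^ (-β)) ^ 2) := by
        rw [mul_pow, mul_pow, sq_sqrt (by positivity), show (2:ℝ) ^ 2 = 4 by norm_num]
        exact sqrt_le_sqrt (integral_logWeight_sq_mul_gaussianIn_sq_le hα hβ hμ hσ1 hsmall)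
    _ = 2 * √K * log (1 / σ) ^ (-β) :=
        sqrt_sq (by have := rpow_pos_of_pos (log_pos (one_lt_one_div hσ1.1 hσ1.2)) (-β); positivity)
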